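/- arXiv:1109.4716 — 4 statements merged into one kernel-verified Lean document; each statement's English description precedes it below -/
import Mathlib

section
/- For any ω ∈ ℝ³, the closed-form Cayley map satisfies I₃ + (4/(4+‖ω‖²))(ω̂ + ω̂²/2) = (I₃ - ω̂/2)⁻¹ (I₃ + ω̂/2), and in particular the matrix I₃ - ω̂/2 is invertible. -/
/-!
Put `s = ‖ω‖²`. The matrix `W = ω̂` satisfies `W³ = -s W`, so products of polynomials in `W`
reduce to quadratic ones. This makes `1 + (2/(4+s)) W + (1/(4+s)) W²` a two-sided inverse of
`1 - W/2` whenever `4 + s ≠ 0`, and multiplying it by `1 + W/2` gives the closed form.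
-/

open Matrix

def hat (x : Fin 3 → ℝ) : Matrix (Fin 3) (Fin 3) ℝ :=
  !![0, -x 2, x 1; x 2, 0, -x 0; -x 1, x 0, 0]

theorem hat_pow_three (x : Fin 3 → ℝ) :
    hat x ^ 3 = -(x 0 ^ 2 + x 1 ^ 2 + x 2 ^ 2) • hat x := by
  ext i j
  fin_cases i <;> fin_cases j <;>
    simp [hat, pow_succ, Matrix.mul_apply, Fin.sum_univ_three] <;> ring

section CubicRelation

variable {K R : Type*} [Field K] [Ring R] [Algebra K R]

variable (K) in
noncomputable def cayley (W : R) : R :=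
  Ring.inverse (1 - (1 / 2 : K) • W) * (1 + (1 / 2 : K) • W)

variable {W : R} {s : K}

theorem linear_mul_quadratic_of_pow_three (hW : W ^ 3 = -s • W) (a b c : K) :
    (1 + c • W) * (1 + a • W + b • W ^ 2) =
      1 + (a + c - b * c * s) • W + (b + a * c) • W ^ 2 := by
  simp only [add_mul, one_mul, mul_add, mul_one, smul_mul_assoc, mul_smul_comm, smul_smul,
    ← sq, ← pow_succ', hW]
  match_scalars <;> ring

theorem quadratic_mul_linear_of_pow_three (hW : W ^ 3 = -s • W) (a b c : K) :
    (1 + a • W + b • W ^ 2) * (1 + c • W) =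
      1 + (a + c - b * c * s) • W + (b + a * c) • W ^ 2 := by
  simp only [add_mul, one_mul, mul_add, mul_one, smul_mul_assoc, mul_smul_comm, smul_smul,
    ← sq, ← pow_succ, hW]
  match_scalars <;> ring

def unitOneSubHalfSmulOfPowThree (h2 : (2 : K) ≠ 0) (hs : 4 + s ≠ 0) (hW : W ^ 3 = -s • W) :
    Rˣ where
  val := 1 - (1 / 2 : K) • W
  inv := 1 + (2 / (4 + s)) • W + (1 / (4 + s)) • W ^ 2
  val_inv := by
    rw [sub_eq_add_neg, ← neg_smul, linear_mul_quadratic_of_pow_three hW]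
    match_scalars <;> field_simp <;> ring
  inv_val := by
    rw [sub_eq_add_neg, ← neg_smul, quadratic_mul_linear_of_pow_three hW]
    match_scalars <;> field_simp <;> ring

theorem isUnit_one_sub_half_smul_of_pow_three (h2 : (2 : K) ≠ 0) (hs : 4 + s ≠ 0)
    (hW : W ^ 3 = -s • W) : IsUnit (1 - (1 / 2 : K) • W) :=
  (unitOneSubHalfSmulOfPowThree h2 hs hW).isUnit

theorem cayley_eq_of_pow_three (h2 : (2 : K) ≠ 0) (hs : 4 + s ≠ 0) (hW : W ^ 3 = -s • W) :
    cayley K W = 1 + (4 / (4 + s)) • (W + (1 / 2 : K) • W ^ 2) := by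
  have hinv : Ring.inverse (1 - (1 / 2 : K) • W) =
      1 + (2 / (4 + s)) • W + (1 / (4 + s)) • W ^ 2 :=
    Ring.inverse_unit (unitOneSubHalfSmulOfPowThree h2 hs hW)
  rw [cayley, hinv, quadratic_mul_linear_of_pow_three hW]
  match_scalars <;> field_simp <;> ring

end CubicRelation

/-- The closed form of the Cayley map on `𝔰𝔬(3)`: the matrix `I₃ - ω̂/2` is
invertible and `I₃ + (4/(4+‖ω‖²))(ω̂ + ω̂²/2) = (I₃ - ω̂/2)⁻¹ (I₃ + ω̂/2)`. -/
theorem caySO3_closed_form (ω : Fin 3 → ℝ) :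
    IsUnit (1 - (1 / 2 : ℝ) • hat ω) ∧
      1 + (4 / (4 + (ω 0 ^ 2 + ω 1 ^ 2 + ω 2 ^ 2))) • (hat ω + (1 / 2 : ℝ) • (hat ω ^ 2)) =
        (1 - (1 / 2 : ℝ) • hat ω)⁻¹ * (1 + (1 / 2 : ℝ) • hat ω) := by
  have hs : (4 : ℝ) + (ω 0 ^ 2 + ω 1 ^ 2 + ω 2 ^ 2) ≠ 0 := by positivity
  rw [nonsing_inv_eq_ringInverse]
  exact ⟨isUnit_one_sub_half_smul_of_pow_three two_ne_zero hs (hat_pow_three ω),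
    (cayley_eq_of_pow_three two_ne_zero hs (hat_pow_three ω)).symm⟩
end

section
/- For any ω ∈ ℝ³, the right trivialized tangent of the Cayley map and its inverse, given by dcay_ω = (2/(4+‖ω‖²))(2I₃ + ω̂) and dcay_ω⁻¹ = I₃ - ω̂/2 + (ωωᵀ)/4, are mutually inverse 3×3 matrices: dcay_ω · dcay_ω⁻¹ = I₃. -/
/-!
`ω̂` is the matrix of `v ↦ ω × v`, so `ω̂ ω = 0` and, by the vector triple product,
`ω̂² = ωωᵀ - ‖ω‖² I₃`. Expanding `(2I₃ + ω̂)(I₃ - ω̂/2 + ωωᵀ/4)` with these two identities, all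
terms in `ω̂` and `ωωᵀ` cancel and `(2 + ‖ω‖²/2) I₃` remains, which the prefactor normalises.
-/

open Matrix

theorem hat_mulVec (x v : Fin 3 → ℝ) : hat x *ᵥ v = x ⨯₃ v := by
  ext i
  fin_cases i <;> simp [hat, cross_apply, mulVec, dotProduct, Fin.sum_univ_three] <;> ring

theorem hat_mul_hat_self (x : Fin 3 → ℝ) : hat x * hat x = vecMulVec x x - (x ⬝ᵥ x) • 1 := by
  refine ext_iff_mulVec.2 fun v => ?_
  rw [← mulVec_mulVec, hat_mulVec, hat_mulVec, cross_cross_eq_smul_sub_smul', sub_mulVec,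
    vecMulVec_mulVec, smul_mulVec, one_mulVec, op_smul_eq_smul, dotProduct_comm x v]

theorem hat_mul_vecMulVec_self (x : Fin 3 → ℝ) : hat x * vecMulVec x x = 0 := by
  rw [mul_vecMulVec, hat_mulVec, cross_self, zero_vecMulVec]

theorem two_smul_one_add_hat_mul (x : Fin 3 → ℝ) :
    ((2 : ℝ) • (1 : Matrix (Fin 3) (Fin 3) ℝ) + hat x) *
      (1 - (1 / 2 : ℝ) • hat x + (1 / 4 : ℝ) • vecMulVec x x) = ((4 + x ⬝ᵥ x) / 2) • 1 := by
  simp only [add_mul, mul_add, mul_sub, smul_mul_assoc, mul_smul_comm, one_mul, mul_one,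
    hat_mul_hat_self, hat_mul_vecMulVec_self]
  module

/-- The right trivialized tangent of the Cayley map,
`dcay_ω = (2/(4+‖ω‖²))(2I₃ + ω̂)`, and its claimed inverse
`dcay_ω⁻¹ = I₃ - ω̂/2 + ωωᵀ/4` are mutually inverse matrices. -/
theorem dcay_mul_dcayInv (ω : Fin 3 → ℝ) :
    ((2 / (4 + (ω 0 ^ 2 + ω 1 ^ 2 + ω 2 ^ 2))) • ((2 : ℝ) • (1 : Matrix (Fin 3) (Fin 3) ℝ) + hat ω)) *
      (1 - (1 / 2 : ℝ) • hat ω + (1 / 4 : ℝ) • vecMulVec ω ω) = 1 := by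
  have hnorm : ω ⬝ᵥ ω = ω 0 ^ 2 + ω 1 ^ 2 + ω 2 ^ 2 := by
    simp [dotProduct, Fin.sum_univ_three, sq]
  have hpos : 4 + ω ⬝ᵥ ω ≠ 0 := by rw [hnorm]; positivity
  rw [smul_mul_assoc, two_smul_one_add_hat_mul, smul_smul, ← hnorm]
  convert one_smul ℝ (1 : Matrix (Fin 3) (Fin 3) ℝ)
  field_simp
end

section
/- Let 𝔤 ≅ ℝⁿ be a Lie algebra with standard pairing, and let L : 𝔤 × 𝔤 → ℝ, (ξ, ξ̇) ↦ L(ξ, ξ̇), be smooth. If ξ : [0,T] → 𝔤 is smooth and for all smooth η : [0,T] → 𝔤 with η(0)=η(T)=η̇(0)=η̇(T)=0 one has ∫₀ᵀ [⟨∂L/∂ξ, η̇ + [ξ,η]⟩ + ⟨∂L/∂ξ̇, d/dt(η̇ + [ξ,η])⟩] dt = 0, then ξ satisfies the second-order Euler-Poincaré equations d²/dt²(∂L/∂ξ̇) - d/dt(∂L/∂ξ) + ad*_ξ(∂L/∂ξ) - ad*_ξ(d/dt ∂L/∂ξ̇) = 0. -/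
set_option maxHeartbeats 1000000


open scoped RealInnerProductSpace

/-- The second-order Euler–Poincaré equations from the variational principle.
Let `𝔤 ≅ ℝⁿ` with continuous bilinear bracket `B` and its dual `adStar` with
respect to the inner product pairing, and let `L(ξ, ξ̇)` be smooth.  Along a
smooth curve `ξ` write `p1 t = ∂L/∂ξ` and `p2 t = ∂L/∂ξ̇` (gradients in each
slot), with derivatives `p1'`, `p2'`, `p2''`.  If for all smooth variations `η`
with `η(0)=η(T)=η̇(0)=η̇(T)=0` the first variation
`∫₀ᵀ [⟨∂L/∂ξ, η̇ + [ξ,η]⟩ + ⟨∂L/∂ξ̇, d/dt(η̇ + [ξ,η])⟩] dt` vanishes, then on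
`[0,T]` the second-order Euler–Poincaré equations
`d²/dt²(∂L/∂ξ̇) - d/dt(∂L/∂ξ) + ad*_ξ(∂L/∂ξ) - ad*_ξ(d/dt ∂L/∂ξ̇) = 0` hold. -/
theorem second_order_euler_poincare {n : ℕ} (T : ℝ) (hT : 0 < T)
    (B : EuclideanSpace ℝ (Fin n) →L[ℝ] EuclideanSpace ℝ (Fin n) →L[ℝ] EuclideanSpace ℝ (Fin n))
    (adStar : EuclideanSpace ℝ (Fin n) → EuclideanSpace ℝ (Fin n) → EuclideanSpace ℝ (Fin n))
    (hadStar : ∀ x μ η, ⟪adStar x μ, η⟫ = ⟪μ, B x η⟫)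
    (L : EuclideanSpace ℝ (Fin n) × EuclideanSpace ℝ (Fin n) → ℝ) (hL : ContDiff ℝ (⊤ : ℕ∞) L)
    (ξ ξ' p1 p1' p2 p2' p2'' : ℝ → EuclideanSpace ℝ (Fin n))
    (hξ : ∀ t, HasDerivAt ξ (ξ' t) t) (hξ' : Continuous ξ')
    (hp1def : ∀ t, p1 t = gradient (fun a => L (a, ξ' t)) (ξ t))
    (hp2def : ∀ t, p2 t = gradient (fun b => L (ξ t, b)) (ξ' t))
    (hp1 : ∀ t, HasDerivAt p1 (p1' t) t) (hp1' : Continuous p1')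
    (hp2 : ∀ t, HasDerivAt p2 (p2' t) t)
    (hp2' : ∀ t, HasDerivAt p2' (p2'' t) t) (hp2'' : Continuous p2'')
    (hvar : ∀ η η' η'' : ℝ → EuclideanSpace ℝ (Fin n),
      (∀ t, HasDerivAt η (η' t) t) → (∀ t, HasDerivAt η' (η'' t) t) → Continuous η'' →
      η 0 = 0 → η T = 0 → η' 0 = 0 → η' T = 0 →
      ∫ t in (0 : ℝ)..T,
        (⟪p1 t, η' t + B (ξ t) (η t)⟫ +
          ⟪p2 t, η'' t + B (ξ' t) (η t) + B (ξ t) (η' t)⟫) = 0) :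
    ∀ t ∈ Set.Icc (0 : ℝ) T,
      p2'' t - p1' t + adStar (ξ t) (p1 t) - adStar (ξ t) (p2' t) = 0 := by
  -- basic continuity facts
  have hcξ : Continuous ξ := continuous_iff_continuousAt.2 fun t => (hξ t).continuousAt
  have hcp1 : Continuous p1 := continuous_iff_continuousAt.2 fun t => (hp1 t).continuousAt
  have hcp2 : Continuous p2 := continuous_iff_continuousAt.2 fun t => (hp2 t).continuousAt
  have hcp2' : Continuous p2' := continuous_iff_continuousAt.2 fun t => (hp2' t).continuousAt
  -- adStar is the adjoint, hence continuous in both slots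
  have hadj : ∀ x μ, adStar x μ = ContinuousLinearMap.adjoint (B x) μ := by
    intro x μ
    apply ext_inner_right ℝ
    intro y
    rw [hadStar, ContinuousLinearMap.adjoint_inner_left]
  set F : ℝ → EuclideanSpace ℝ (Fin n) := fun t => p2'' t - p1' t + adStar (ξ t) (p1 t) - adStar (ξ t) (p2' t) with hF
  have hadjcont : ∀ (w : ℝ → EuclideanSpace ℝ (Fin n)), Continuous w →
      Continuous (fun t => adStar (ξ t) (w t)) := by
    intro w hw
    have : Continuous fun t => ContinuousLinearMap.adjoint (B (ξ t)) (w t) := by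
      apply Continuous.clm_apply _ hw
      exact (ContinuousLinearMap.adjoint (𝕜 := ℝ) (E := EuclideanSpace ℝ (Fin n)) (F := EuclideanSpace ℝ (Fin n))).continuous.comp
        (B.continuous.comp hcξ)
    simpa only [hadj] using this
  have hFcont : Continuous F := by
    apply ((hp2''.sub hp1').add (hadjcont p1 hcp1)).sub (hadjcont p2' hcp2')
  -- Key step: the weak form for F
  have key : ∀ η η' η'' : ℝ → EuclideanSpace ℝ (Fin n),
      (∀ t, HasDerivAt η (η' t) t) → (∀ t, HasDerivAt η' (η'' t) t) → Continuous η'' →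
      η 0 = 0 → η T = 0 → η' 0 = 0 → η' T = 0 →
      (∫ t in (0 : ℝ)..T, ⟪F t, η t⟫) = 0 := by
    intro η η' η'' hη hη' hη'' hη0 hηT hη'0 hη'T
    have hcη : Continuous η := continuous_iff_continuousAt.2 fun t => (hη t).continuousAt
    have hcη' : Continuous η' := continuous_iff_continuousAt.2 fun t => (hη' t).continuousAt
    set G : ℝ → ℝ := fun t =>
      ⟪p1 t, η t⟫ + ⟪p2 t, η' t⟫ + ⟪p2 t, B (ξ t) (η t)⟫ - ⟪p2' t, η t⟫ with hG
    set I : ℝ → ℝ := fun t =>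
      ⟪p1 t, η' t + B (ξ t) (η t)⟫ +
        ⟪p2 t, η'' t + B (ξ' t) (η t) + B (ξ t) (η' t)⟫ with hI
    have hBder : ∀ t, HasDerivAt (fun s => B (ξ s) (η s))
        (B (ξ' t) (η t) + B (ξ t) (η' t)) t := by
      intro t
      exact (B.hasFDerivAt.comp_hasDerivAt t (hξ t)).clm_apply (hη t)
    have hGder : ∀ t, HasDerivAt G (I t - ⟪F t, η t⟫) t := by
      intro t
      have h := ((((hp1 t).inner ℝ (hη t)).add ((hp2 t).inner ℝ (hη' t))).add
        ((hp2 t).inner ℝ (hBder t))).sub ((hp2' t).inner ℝ (hη t))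
      refine HasDerivAt.congr_deriv h ?_
      simp only [hI, hF, inner_add_right, inner_add_left, inner_sub_left, hadStar]
      ring
    have hBcont : Continuous fun t => B (ξ t) (η t) :=
      Continuous.clm_apply (B.continuous.comp hcξ) hcη
    have hBcont' : Continuous fun t => B (ξ' t) (η t) :=
      Continuous.clm_apply (B.continuous.comp hξ') hcη
    have hBcont'' : Continuous fun t => B (ξ t) (η' t) :=
      Continuous.clm_apply (B.continuous.comp hcξ) hcη'
    have hIcont : Continuous I := by
      apply Continuous.add
      · exact hcp1.inner (hcη'.add hBcont)
      · exact hcp2.inner ((hη''.add hBcont').add hBcont'')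
    have hFηcont : Continuous fun t => ⟪F t, η t⟫ := hFcont.inner hcη
    have hFTC : (∫ t in (0 : ℝ)..T, (I t - ⟪F t, η t⟫)) = G T - G 0 :=
      intervalIntegral.integral_eq_sub_of_hasDerivAt (fun t _ => hGder t)
        ((hIcont.sub hFηcont).intervalIntegrable 0 T)
    have hGT : G T = 0 := by
      simp [hG, hηT, hη'T, inner_zero_right]
    have hG0 : G 0 = 0 := by
      simp [hG, hη0, hη'0, inner_zero_right]
    have hIzero : (∫ t in (0 : ℝ)..T, I t) = 0 :=
      hvar η η' η'' hη hη' hη'' hη0 hηT hη'0 hη'T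
    have hsplit : (∫ t in (0 : ℝ)..T, ⟪F t, η t⟫)
        = (∫ t in (0 : ℝ)..T, I t) - ∫ t in (0 : ℝ)..T, (I t - ⟪F t, η t⟫) := by
      rw [← intervalIntegral.integral_sub (g := fun t => I t - ⟪F t, η t⟫) (hIcont.intervalIntegrable 0 T)
        ((hIcont.sub hFηcont).intervalIntegrable 0 T)]
      congr 1
      ext t
      ring
    rw [hsplit, hIzero, hFTC, hGT, hG0]
    ring
  -- Fundamental lemma: F vanishes on the open interval
  have hIoo : ∀ t₀ ∈ Set.Ioo (0 : ℝ) T, F t₀ = 0 := by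
    intro t₀ ht₀
    by_contra hne
    set v := F t₀ with hv
    have hvpos : 0 < ⟪F t₀, v⟫ := by
      rw [hv, real_inner_self_eq_norm_sq]
      exact pow_pos (norm_pos_iff.2 hne) 2
    have hU : IsOpen ({t : ℝ | 0 < ⟪F t, v⟫} ∩ Set.Ioo 0 T) :=
      (isOpen_lt continuous_const (hFcont.inner continuous_const)).inter isOpen_Ioo
    obtain ⟨ε, hε, hball⟩ := Metric.isOpen_iff.1 hU t₀ ⟨hvpos, ht₀⟩
    -- bump function
    set φ : ContDiffBump t₀ := ⟨ε/4, ε/2, by positivity, by linarith⟩ with hφ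
    have hφc : ContDiff ℝ (↑(⊤ : ℕ∞)) (φ : ℝ → ℝ) := φ.contDiff
    have hφd : ∀ t, HasDerivAt φ (deriv φ t) t :=
      fun t => (hφc.differentiable (by simp) t).hasDerivAt
    have hφ'c : ContDiff ℝ (↑(⊤ : ℕ∞)) (deriv (φ : ℝ → ℝ)) :=
      (contDiff_infty_iff_deriv.1 hφc).2
    have hφ'd : ∀ t, HasDerivAt (deriv (φ : ℝ → ℝ)) (deriv (deriv (φ : ℝ → ℝ)) t) t :=
      fun t => (hφ'c.differentiable (by simp) t).hasDerivAt
    have hφ''c : Continuous (deriv (deriv (φ : ℝ → ℝ))) :=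
      (contDiff_infty_iff_deriv.1 hφ'c).2.continuous
    -- boundary vanishing
    have hd0 : ε ≤ dist (0 : ℝ) t₀ := by
      by_contra h
      push_neg at h
      exact absurd (hball h).2.1 (by norm_num)
    have hdT : ε ≤ dist T t₀ := by
      by_contra h
      push_neg at h
      exact absurd (hball h).2.2 (by norm_num)
    have hev0 : (φ : ℝ → ℝ) =ᶠ[nhds (0 : ℝ)] fun _ => 0 := by
      have : ∀ᶠ t in nhds (0 : ℝ), ε/2 < dist t t₀ := by
        apply (isOpen_lt continuous_const (continuous_id.dist continuous_const)).eventually_mem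
        simp only [Set.mem_setOf_eq, id_eq]
        linarith
      filter_upwards [this] with t ht
      exact φ.zero_of_le_dist (le_of_lt ht)
    have hevT : (φ : ℝ → ℝ) =ᶠ[nhds T] fun _ => 0 := by
      have : ∀ᶠ t in nhds T, ε/2 < dist t t₀ := by
        apply (isOpen_lt continuous_const (continuous_id.dist continuous_const)).eventually_mem
        simp only [Set.mem_setOf_eq, id_eq]
        linarith
      filter_upwards [this] with t ht
      exact φ.zero_of_le_dist (le_of_lt ht)
    have hφ0 : φ 0 = 0 := hev0.eq_of_nhds
    have hφT : φ T = 0 := hevT.eq_of_nhds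
    have hφ'0 : deriv (φ : ℝ → ℝ) 0 = 0 := by
      rw [hev0.deriv_eq]; simp
    have hφ'T : deriv (φ : ℝ → ℝ) T = 0 := by
      rw [hevT.deriv_eq]; simp
    -- test curve
    have hint := key (fun t => φ t • v) (fun t => deriv (φ : ℝ → ℝ) t • v)
      (fun t => deriv (deriv (φ : ℝ → ℝ)) t • v)
      (fun t => (hφd t).smul_const v) (fun t => (hφ'd t).smul_const v)
      (hφ''c.smul continuous_const)
      (by show φ 0 • v = 0; rw [hφ0, zero_smul])
      (by show φ T • v = 0; rw [hφT, zero_smul])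
      (by show deriv (φ : ℝ → ℝ) 0 • v = 0; rw [hφ'0, zero_smul])
      (by show deriv (φ : ℝ → ℝ) T • v = 0; rw [hφ'T, zero_smul])
    set g : ℝ → ℝ := fun t => ⟪F t, φ t • v⟫ with hg
    have hgeq : ∀ t, g t = φ t * ⟪F t, v⟫ := fun t => real_inner_smul_right (F t) v (φ t)
    have hgcont : Continuous g :=
      hFcont.inner ((φ.continuous).smul continuous_const)
    have hgnonneg : ∀ t, 0 ≤ g t := by
      intro t
      rw [hgeq]
      rcases le_or_gt (ε/2) (dist t t₀) with h | h
      · rw [φ.zero_of_le_dist h]; simp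
      · have htb : t ∈ Metric.ball t₀ ε := by
          rw [Metric.mem_ball]; linarith
        exact mul_nonneg φ.nonneg (le_of_lt (hball htb).1)
    have hsub1 : (0 : ℝ) ≤ t₀ - ε/4 := by
      have : t₀ - ε/2 ∈ Set.Ioo (0 : ℝ) T := by
        refine (hball ?_).2
        rw [Metric.mem_ball, Real.dist_eq]
        rw [abs_of_nonpos (by linarith)]
        linarith
      linarith [this.1]
    have hsub2 : t₀ + ε/4 ≤ T := by
      have : t₀ + ε/2 ∈ Set.Ioo (0 : ℝ) T := by
        refine (hball ?_).2
        rw [Metric.mem_ball, Real.dist_eq]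
        rw [abs_of_nonneg (by linarith)]
        linarith
      linarith [this.2]
    have hpos : 0 < ∫ t in (t₀ - ε/4)..(t₀ + ε/4), g t := by
      apply intervalIntegral.intervalIntegral_pos_of_pos_on
        (hgcont.intervalIntegrable _ _)
      · intro t ht
        rw [hgeq]
        have htb2 : t ∈ Metric.ball t₀ (ε/2) := by
          rw [Metric.mem_ball, Real.dist_eq, abs_lt]
          constructor <;> [linarith [ht.1]; linarith [ht.2]]
        have htb : t ∈ Metric.ball t₀ ε := by
          rw [Metric.mem_ball, Real.dist_eq, abs_lt]
          rw [Metric.mem_ball, Real.dist_eq, abs_lt] at htb2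
          constructor <;> [linarith [htb2.1]; linarith [htb2.2]]
        exact mul_pos (φ.pos_of_mem_ball htb2) (hball htb).1
      · linarith
    have hmono : (∫ t in (t₀ - ε/4)..(t₀ + ε/4), g t) ≤ ∫ t in (0:ℝ)..T, g t := by
      apply intervalIntegral.integral_mono_interval hsub1 (by linarith) hsub2
      · exact Filter.Eventually.of_forall fun t => hgnonneg t
      · exact hgcont.intervalIntegrable 0 T
    rw [hint] at hmono
    linarith
  -- extend by continuity to the closed interval
  intro t ht
  have hclosure : Set.EqOn F (fun _ => 0) (Set.Icc 0 T) := by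
    have h1 : Set.EqOn F (fun _ => 0) (Set.Ioo 0 T) := fun s hs => hIoo s hs
    have := h1.closure hFcont continuous_const
    rwa [closure_Ioo hT.ne] at this
  exact hclosure ht
end

section
/- Let G be a matrix Lie group, h > 0, τ : 𝔤 → G a smooth retraction with τ(0) = e, and suppose R_k, R_{k+1} ∈ G satisfy the reconstruction relation R_{k+1} = R_k τ(hΩ_k). Given variations δR_k = R_k η_k, δR_{k+1} = R_{k+1} η_{k+1}, the induced variation of Ω_k satisfies δΩ_k = dτ⁻¹_{hΩ_k}(-η_k + Ad_{τ(hΩ_k)} η_{k+1})/h, where dτ_ξ is the right trivialized tangent defined by ∂_ξτ(ξ)·η = (dτ_ξ η) τ(ξ) and Ad_g ξ = g ξ g⁻¹. -/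
/-! Differentiating `R_{k+1} = R_k τ(hΩ_k)` by the product rule and cancelling `R_k` on the left
gives `τ η_{k+1} = (η_k + dτ(h δΩ)) τ`; multiplying on the right by `τ⁻¹ = τ(-hΩ)` and applying
`dτ⁻¹` solves for `δΩ`. -/

open Matrix

attribute [local instance] Matrix.linftyOpNormedAddCommGroup Matrix.linftyOpNormedRing
  Matrix.linftyOpNormedAlgebra

theorem mul_trivialized_deriv_eq {𝕜 𝔸 : Type*} [NontriviallyNormedField 𝕜] [NormedRing 𝔸]
    [NormedAlgebra 𝕜 𝔸] {R S P : 𝕜 → 𝔸} {x : 𝕜} {η ηP D Rinv : 𝔸}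
    (hP : ∀ t, P t = R t * S t) (hR : HasDerivAt R (R x * η) x)
    (hS : HasDerivAt S (D * S x) x) (hPd : HasDerivAt P (P x * ηP) x)
    (hRinv : Rinv * R x = 1) :
    S x * ηP = η * S x + D * S x := by
  have hprod : HasDerivAt P (R x * η * S x + R x * (D * S x)) x := by
    rw [funext hP]
    exact hR.fun_mul hS
  have hlift : R x * (S x * ηP) = R x * (η * S x + D * S x) := by
    rw [← mul_assoc, ← hP, hPd.unique hprod, mul_add, mul_assoc]
  simpa only [← mul_assoc, hRinv, one_mul] using congrArg (Rinv * ·) hlift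

theorem eq_neg_add_mul_mul_of_mul_eq {α : Type*} [Ring α] {S S' η η' D : α}
    (hS : S * S' = 1) (h : S * η' = η * S + D * S) :
    D = -η + S * η' * S' := by
  rw [eq_neg_add_iff_add_eq, h]
  simp only [add_mul, mul_assoc, hS, mul_one]

theorem discrete_variation_retraction_general {n : ℕ} (h : ℝ) (hh : 0 < h)
    (τ : Matrix (Fin n) (Fin n) ℝ → Matrix (Fin n) (Fin n) ℝ)
    (dτ dτinv : Matrix (Fin n) (Fin n) ℝ → Matrix (Fin n) (Fin n) ℝ → Matrix (Fin n) (Fin n) ℝ)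
    (hτinv : ∀ ξ, τ ξ * τ (-ξ) = 1 ∧ τ (-ξ) * τ ξ = 1)
    (hdτ : ∀ ξ η, dτ ξ (dτinv ξ η) = η ∧ dτinv ξ (dτ ξ η) = η)
    (Rk Rk1 Rkinv : ℝ → Matrix (Fin n) (Fin n) ℝ)
    (Ω : ℝ → Matrix (Fin n) (Fin n) ℝ) (δΩ ηk ηk1 : Matrix (Fin n) (Fin n) ℝ)
    (hRkinv : ∀ ε, Rk ε * Rkinv ε = 1 ∧ Rkinv ε * Rk ε = 1)
    (hrec : ∀ ε, Rk1 ε = Rk ε * τ (h • Ω ε))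
    (hRk : HasDerivAt Rk (Rk 0 * ηk) 0)
    (hRk1 : HasDerivAt Rk1 (Rk1 0 * ηk1) 0)
    (hτchain : HasDerivAt (fun ε => τ (h • Ω ε)) (dτ (h • Ω 0) (h • δΩ) * τ (h • Ω 0)) 0) :
    δΩ = h⁻¹ • dτinv (h • Ω 0) (-ηk + τ (h • Ω 0) * ηk1 * τ (-(h • Ω 0))) := by
  have hτη : τ (h • Ω 0) * ηk1 = ηk * τ (h • Ω 0) + dτ (h • Ω 0) (h • δΩ) * τ (h • Ω 0) :=
    mul_trivialized_deriv_eq (S := fun ε => τ (h • Ω ε)) hrec hRk hτchain hRk1 (hRkinv 0).2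
  have hdτΩ := eq_neg_add_mul_mul_of_mul_eq (hτinv _).1 hτη
  rw [← hdτΩ, (hdτ _ _).2, smul_smul, inv_mul_cancel₀ hh.ne', one_smul]

/-- Variation of the discrete algebra element under the reconstruction relation
`R_{k+1} = R_k τ(hΩ_k)` on a matrix Lie group.  Here `τ` is a retraction with
`τ(ξ)τ(-ξ) = e`, `dτ_ξ` is its right trivialized tangent (linear in the second
argument, with inverse `dτ⁻¹_ξ`), and the chain-rule hypothesis `hτchain`
expresses `∂_ξτ(ξ)·η = (dτ_ξ η)τ(ξ)` along the varied curve.  Given variations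
`δR_k = R_k η_k` and `δR_{k+1} = R_{k+1} η_{k+1}`, the induced variation of
`Ω_k` is `δΩ_k = dτ⁻¹_{hΩ_k}(-η_k + Ad_{τ(hΩ_k)} η_{k+1})/h`. -/
theorem discrete_variation_retraction {n : ℕ} (h : ℝ) (hh : 0 < h)
    (τ : Matrix (Fin n) (Fin n) ℝ → Matrix (Fin n) (Fin n) ℝ)
    (dτ dτinv : Matrix (Fin n) (Fin n) ℝ → Matrix (Fin n) (Fin n) ℝ → Matrix (Fin n) (Fin n) ℝ)
    (hτ0 : τ 0 = 1)
    (hτinv : ∀ ξ, τ ξ * τ (-ξ) = 1 ∧ τ (-ξ) * τ ξ = 1)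
    (hdτlin : ∀ ξ, IsLinearMap ℝ (dτ ξ))
    (hdτ : ∀ ξ η, dτ ξ (dτinv ξ η) = η ∧ dτinv ξ (dτ ξ η) = η)
    (Rk Rk1 Rkinv : ℝ → Matrix (Fin n) (Fin n) ℝ)
    (Ω : ℝ → Matrix (Fin n) (Fin n) ℝ) (δΩ ηk ηk1 : Matrix (Fin n) (Fin n) ℝ)
    (hRkinv : ∀ ε, Rk ε * Rkinv ε = 1 ∧ Rkinv ε * Rk ε = 1)
    (hrec : ∀ ε, Rk1 ε = Rk ε * τ (h • Ω ε))
    (hRk : HasDerivAt Rk (Rk 0 * ηk) 0)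
    (hRk1 : HasDerivAt Rk1 (Rk1 0 * ηk1) 0)
    (hΩ : HasDerivAt Ω δΩ 0)
    (hτchain : HasDerivAt (fun ε => τ (h • Ω ε)) (dτ (h • Ω 0) (h • δΩ) * τ (h • Ω 0)) 0) :
    δΩ = h⁻¹ • dτinv (h • Ω 0) (-ηk + τ (h • Ω 0) * ηk1 * τ (-(h • Ω 0))) :=
  discrete_variation_retraction_general h hh τ dτ dτinv hτinv hdτ Rk Rk1 Rkinv Ω δΩ ηk ηk1 hRkinv
    hrec hRk hRk1 hτchain
end
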